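/- arXiv:0708.1582 — 3 statements merged into one kernel-verified Lean document; each statement's English description precedes it below -/
import Mathlib

section
/- For a valley permutation w with floor at a, the number of inversions ℓ(w) equals |μ(w)|, the sum of w(i) - 1 over i = 1,...,a. -/
/-- `w` fixes every point outside `{1,…,n}`, so it is a permutation of `{1,…,n}`. -/
def FixOutside (n : ℕ) (w : Equiv.Perm ℕ) : Prop :=
  ∀ i, i ∉ Finset.Icc 1 n → w i = i

/-- `w` is a valley permutation of `{1,…,n}` with floor at `a`:
`w(1) > w(2) > ⋯ > w(a)` and `w(a+1) < ⋯ < w(n)`. -/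
def IsValley (n a : ℕ) (w : Equiv.Perm ℕ) : Prop :=
  (∀ i j, 1 ≤ i → i < j → j ≤ a → w j < w i) ∧
  (∀ i j, a < i → i < j → j ≤ n → w i < w j)

/-- The number of inversions of `w` as a permutation of `{1,…,n}`. -/
def NumInv (n : ℕ) (w : Equiv.Perm ℕ) : ℕ :=
  ((Finset.Icc 1 n ×ˢ Finset.Icc 1 n).filter
    (fun p => p.1 < p.2 ∧ w p.2 < w p.1)).card

/-- The relation `v ≤_a w` on permutations of `{1,…,n}`:
(1) for `i ≤ a < j`, `w(i) ≥ v(i)` and `w(j) ≤ v(j)`;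
(2) for `i < j ≤ a` with `v(i) < v(j)`, `w(i) < w(j)`; and
    for `a < i < j` with `v(i) < v(j)`, `w(i) < w(j)`. -/
def ABruhat (n a : ℕ) (v w : Equiv.Perm ℕ) : Prop :=
  (∀ i j, 1 ≤ i → i ≤ a → a < j → j ≤ n → v i ≤ w i ∧ w j ≤ v j) ∧
  (∀ i j, 1 ≤ i → i < j → j ≤ a → v i < v j → w i < w j) ∧
  (∀ i j, a < i → i < j → j ≤ n → v i < v j → w i < w j)

/-
Count inversions by their left entry `i`. If `i > a`, everything to the right of `i` is larger,
so there are none. If `i ≤ a`, everything to the left of `i` is larger, so every smaller value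
`v < w(i)` sits to the right of `i`: `w` maps the inversions starting at `i` onto `{1,…,w(i) - 1}`.
-/

open Finset

def rightInversions (n : ℕ) (w : Equiv.Perm ℕ) (i : ℕ) : Finset ℕ :=
  (Icc 1 n).filter fun j => i < j ∧ w j < w i

lemma numInv_eq_sum_card_rightInversions (n : ℕ) (w : Equiv.Perm ℕ) :
    NumInv n w = ∑ i ∈ Icc 1 n, #(rightInversions n w i) := by
  rw [NumInv, card_filter, sum_product]
  simp only [rightInversions, card_filter]

lemma FixOutside.apply_mem_Icc_iff {n : ℕ} {w : Equiv.Perm ℕ} (hwf : FixOutside n w) (i : ℕ) :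
    w i ∈ Icc 1 n ↔ i ∈ Icc 1 n := by
  constructor
  · intro hwi
    by_contra hi
    rw [hwf i hi] at hwi
    exact hi hwi
  · intro hi
    by_contra hwi
    rw [w.injective (hwf (w i) hwi)] at hwi
    exact hwi hi

section

variable {n : ℕ} {w : Equiv.Perm ℕ} {i : ℕ}

lemma rightInversions_eq_empty (hinc : ∀ j, i < j → j ≤ n → w i < w j) :
    rightInversions n w i = ∅ := by
  refine filter_eq_empty_iff.mpr fun j hj ⟨hij, hji⟩ => ?_
  exact (hinc j hij (mem_Icc.mp hj).2).not_gt hji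

lemma map_rightInversions_eq_Ico (hwf : FixOutside n w) (hi : i ∈ Icc 1 n)
    (hdec : ∀ j, 1 ≤ j → j < i → w i < w j) :
    (rightInversions n w i).map w.toEmbedding = Ico 1 (w i) := by
  ext v
  simp only [rightInversions, mem_map, mem_filter, Equiv.coe_toEmbedding, mem_Ico]
  constructor
  · rintro ⟨j, ⟨hj, -, hji⟩, rfl⟩
    exact ⟨(mem_Icc.mp ((hwf.apply_mem_Icc_iff j).mpr hj)).1, hji⟩
  · rintro ⟨hv, hvi⟩
    have hwi := mem_Icc.mp ((hwf.apply_mem_Icc_iff i).mpr hi)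
    have hj : w.symm v ∈ Icc 1 n := by
      rw [← hwf.apply_mem_Icc_iff, Equiv.apply_symm_apply, mem_Icc]
      omega
    refine ⟨w.symm v, ⟨hj, ?_, by simpa using hvi⟩, by simp⟩
    rcases lt_trichotomy i (w.symm v) with h | rfl | h
    · exact h
    · simp at hvi
    · have hlt := hdec _ (mem_Icc.mp hj).1 h
      rw [Equiv.apply_symm_apply] at hlt
      exact absurd hvi hlt.not_gt

lemma card_rightInversions_eq_sub_one (hwf : FixOutside n w) (hi : i ∈ Icc 1 n)
    (hdec : ∀ j, 1 ≤ j → j < i → w i < w j) :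
    #(rightInversions n w i) = w i - 1 := by
  rw [← card_map w.toEmbedding, map_rightInversions_eq_Ico hwf hi hdec, Nat.card_Ico]

end

theorem valley_length_eq_shape_size_general (n a : ℕ) (ha2 : a ≤ n)
    (w : Equiv.Perm ℕ) (hwf : FixOutside n w) (hw : IsValley n a w) :
    NumInv n w = ∑ i ∈ Finset.Icc 1 a, (w i - 1) := by
  have hsub : Icc 1 a ⊆ Icc 1 n := Icc_subset_Icc_right ha2
  rw [numInv_eq_sum_card_rightInversions, ← sum_subset hsub]
  · refine sum_congr rfl fun i hi => ?_
    exact card_rightInversions_eq_sub_one hwf (hsub hi) fun j hj hji =>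
      hw.1 j i hj hji (mem_Icc.mp hi).2
  · intro i hin hia
    have hai : a < i := by simp only [mem_Icc] at hin hia; omega
    rw [rightInversions_eq_empty fun j hij hjn => hw.2 i j hai hij hjn, card_empty]

/-- For a valley permutation `w` with floor at `a`, the number of inversions `ℓ(w)`
equals `|μ(w)| = ∑_{i=1}^{a} (w(i) − 1)`. -/
theorem valley_length_eq_shape_size (n a : ℕ) (ha1 : 1 ≤ a) (ha2 : a ≤ n)
    (w : Equiv.Perm ℕ) (hwf : FixOutside n w) (hw : IsValley n a w) :
    NumInv n w = ∑ i ∈ Finset.Icc 1 a, (w i - 1) :=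
  valley_length_eq_shape_size_general n a ha2 w hwf hw
end

section
/- Define a Grassmannian Schubert problem datum Λ = ((a_1,λ_1),...,(a_s,λ_s)) with a_1 ≤ ... ≤ a_s, a_i ∈ α, λ_i a partition in the a_i × (n - a_i) rectangle. Inserting a new pair (b, κ), where α_i < b < α_{i+1} for consecutive elements of α and κ is the rectangular partition with b - α_i rows and α_{i+1} - b columns, gives a bijection between filtered tableaux of shape ⎡_α with content Λ and filtered tableaux of shape ⎡_{α ∪ {b}} with content Λ' = ((a_1,λ_1),...,(b,κ),...,(a_s,λ_s)) (inserted in sorted position). -/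
/-- The rectangle `b × (n−b)`, with the shared upper-right-corner convention:
boxes `(i,j)` with `1 ≤ i ≤ b` and `b ≤ j ≤ n−1`. -/
def Rect (n b : ℕ) : Finset (ℕ × ℕ) := Finset.Icc 1 b ×ˢ Finset.Icc b (n - 1)

/-- The region `⎡_α`, the union of the rectangles `a × (n−a)` for `a ∈ α`
sharing a common upper-right corner. -/
def Staircase (n : ℕ) (α : Finset ℕ) : Finset (ℕ × ℕ) := α.biUnion fun a => Rect n a

/-- `μ` is a (northwest-justified) shape inside the region `R`. -/
def IsShapeIn (R μ : Finset (ℕ × ℕ)) : Prop :=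
  μ ⊆ R ∧ ∀ p ∈ μ, ∀ q ∈ R, q.1 ≤ p.1 → q.2 ≤ p.2 → q ∈ μ

/-- The boxes of `S` read (right-to-left along rows, top-to-bottom) no later
than the box `p`. -/
def ReadPrefix (S : Finset (ℕ × ℕ)) (p : ℕ × ℕ) : Finset (ℕ × ℕ) :=
  S.filter fun q => q.1 < p.1 ∨ (q.1 = p.1 ∧ p.2 ≤ q.2)

/-- `T` is a Littlewood–Richardson filling of the (skew) shape `S` with content `lam`:
positive entries (normalized to `0` off `S`), rows weakly increasing, columns strictly
increasing, exactly `lam j` entries equal to `j`, and the right-to-left top-to-bottom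
reading word is a lattice word. -/
def IsLR (S : Finset (ℕ × ℕ)) (lam : ℕ → ℕ) (T : ℕ × ℕ → ℕ) : Prop :=
  (∀ p ∈ S, 1 ≤ T p) ∧
  (∀ q, q ∉ S → T q = 0) ∧
  (∀ p ∈ S, ∀ q ∈ S, p.1 = q.1 → p.2 ≤ q.2 → T p ≤ T q) ∧
  (∀ p ∈ S, ∀ q ∈ S, p.2 = q.2 → p.1 < q.1 → T p < T q) ∧
  (∀ j, 1 ≤ j → (S.filter fun q => T q = j).card = lam j) ∧
  (∀ p ∈ S, ∀ i, 1 ≤ i →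
    ((ReadPrefix S p).filter fun q => T q = i + 1).card ≤
      ((ReadPrefix S p).filter fun q => T q = i).card)

/-- A filtered tableau with shape `⎡_α` and content `((a 1, lam 1), …, (a s, lam s))`:
a chain of shapes `∅ = μ_0 ⊆ μ_1 ⊆ ⋯ ⊆ μ_s = ⎡_α` in `⎡_α`, together with fillings
`T_i` of the skew shapes `μ_i/μ_{i−1}`, such that `μ_i/μ_{i−1}` lies in the rectangle
`a_i × (n − a_i)` and `T_i` is a Littlewood–Richardson tableau of content `lam i`. -/
def IsFilteredTableau (n s : ℕ) (α : Finset ℕ) (a : ℕ → ℕ) (lam : ℕ → ℕ → ℕ)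
    (F : (Fin (s + 1) → Finset (ℕ × ℕ)) × (Fin s → ℕ × ℕ → ℕ)) : Prop :=
  F.1 0 = ∅ ∧ F.1 (Fin.last s) = Staircase n α ∧
  (∀ i : Fin (s + 1), IsShapeIn (Staircase n α) (F.1 i)) ∧
  (∀ i : Fin s, F.1 i.castSucc ⊆ F.1 i.succ) ∧
  (∀ i : Fin s, (F.1 i.succ \ F.1 i.castSucc) ⊆ Rect n (a (i.val + 1))) ∧
  (∀ i : Fin s, IsLR (F.1 i.succ \ F.1 i.castSucc) (lam (i.val + 1)) (F.2 i))

/-!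
The boxes of `⎡_{α ∪ {b}}` outside `⎡_α` form the rectangle `κ` in rows `c+1, …, b` and
columns `b, …, d-1`. In a filtered tableau the steps with `a_i ≤ c` only add boxes in rows `≤ c`
and those with `a_i ≥ d` only boxes in columns `≥ d`, so all of `κ` is added at the step with
rectangle `b`. That step is an LR tableau of content `κ`, hence has `|κ|` boxes: it is exactly
`κ`, and its filling is forced (row `c + r` holds `r`). Thus deleting this step, and the boxes
of `κ` from the later shapes, inverts the insertion of `κ`.
-/

lemma StrictMonoOn.add_sub_le_nat {f : ℕ → ℕ} {lo hi : ℕ} (hf : StrictMonoOn f (Set.Icc lo hi))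
    {x y : ℕ} (hlo : lo ≤ x) (hxy : x ≤ y) (hy : y ≤ hi) : f x + (y - x) ≤ f y := by
  induction y, hxy using Nat.le_induction with
  | base => simp
  | succ y hxy ih =>
    have := hf ⟨hlo.trans hxy, by omega⟩ ⟨by omega, hy⟩ (Nat.lt_succ_self y)
    have := ih (by omega)
    omega

section Chain

variable {X : Type*} [DecidableEq X] {m : ℕ} {μ : Fin (m + 1) → Finset X} {x : X}

lemma exists_mem_step_of_mem (h0 : μ 0 = ∅) (j : Fin (m + 1)) (hx : x ∈ μ j) :
    ∃ i : Fin m, i.castSucc < j ∧ x ∈ μ i.succ \ μ i.castSucc := by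
  induction j using Fin.induction with
  | zero => simp [h0] at hx
  | succ i ih =>
    by_cases hi : x ∈ μ i.castSucc
    · obtain ⟨k, hk, hxk⟩ := ih hi
      exact ⟨k, hk.trans (Fin.castSucc_lt_succ (i := i)), hxk⟩
    · exact ⟨i, Fin.castSucc_lt_succ (i := i), Finset.mem_sdiff.2 ⟨hx, hi⟩⟩

lemma mem_of_mem_last_of_notMem_step (hx : x ∈ μ (Fin.last m)) (j : Fin (m + 1))
    (h : ∀ i : Fin m, j ≤ i.castSucc → x ∉ μ i.succ \ μ i.castSucc) : x ∈ μ j := by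
  induction j using Fin.reverseInduction with
  | last => exact hx
  | cast i ih =>
    have hsucc := ih fun k hk => h k ((Fin.castSucc_lt_succ (i := i)).le.trans hk)
    by_contra hi
    exact h i le_rfl (Finset.mem_sdiff.2 ⟨hsucc, hi⟩)

end Chain

lemma IsShapeIn.sdiff {R K μ : Finset (ℕ × ℕ)} (h : IsShapeIn (R ∪ K) μ) (hRK : Disjoint R K) :
    IsShapeIn R (μ \ K) := by
  refine ⟨fun q hq => ?_, fun q hq r hr h1 h2 => ?_⟩
  · obtain ⟨hqμ, hqK⟩ := Finset.mem_sdiff.1 hq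
    exact (Finset.mem_union.1 (h.1 hqμ)).resolve_right hqK
  · exact Finset.mem_sdiff.2 ⟨h.2 q (Finset.mem_sdiff.1 hq).1 r (Finset.mem_union_left _ hr) h1 h2,
      Finset.disjoint_left.1 hRK hr⟩

section Splice

variable {X : Type*} [DecidableEq X] {s : ℕ}

/-- The chain `μ` with a step adding `K` inserted after position `P`: the new chain is `μ j` for
`j ≤ P` and `μ (j - 1) ∪ K` for `j > P`. -/
def spliceShapes (P : Fin (s + 1)) (K : Finset X) (μ : Fin (s + 1) → Finset X)
    (j : Fin (s + 2)) : Finset X :=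
  μ (P.predAbove j) ∪ if P.castSucc < j then K else ∅

def unspliceShapes (P : Fin (s + 1)) (K : Finset X) (ν : Fin (s + 2) → Finset X)
    (j : Fin (s + 1)) : Finset X :=
  ν (P.castSucc.succAbove j) \ K

variable {P : Fin (s + 1)} {K : Finset X} {μ : Fin (s + 1) → Finset X}

lemma spliceShapes_of_le {j : Fin (s + 2)} (h : j ≤ P.castSucc) :
    spliceShapes P K μ j = μ (P.predAbove j) := by
  simp [spliceShapes, not_lt.2 h]

lemma spliceShapes_of_lt {j : Fin (s + 2)} (h : P.castSucc < j) :
    spliceShapes P K μ j = μ (P.predAbove j) ∪ K := by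
  simp [spliceShapes, h]

lemma spliceShapes_mk_of_le {jv : ℕ} (hjv : jv < s + 2) (h : jv ≤ P) :
    spliceShapes P K μ ⟨jv, hjv⟩ = μ ⟨jv, h.trans_lt P.isLt⟩ := by
  rw [spliceShapes_of_le (Fin.le_def.2 h), Fin.predAbove_of_le_castSucc _ _ (Fin.le_def.2 h)]
  rfl

lemma spliceShapes_mk_of_lt {jv : ℕ} (hjv : jv < s + 2) (h : P < jv) :
    spliceShapes P K μ ⟨jv, hjv⟩ = μ ⟨jv - 1, by omega⟩ ∪ K := by
  have h' : P.castSucc < ⟨jv, hjv⟩ := Fin.lt_def.2 h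
  rw [spliceShapes_of_lt h', Fin.predAbove_of_castSucc_lt _ _ h']
  rfl

lemma spliceShapes_zero : spliceShapes P K μ 0 = μ 0 := by
  rw [spliceShapes_of_le (Fin.zero_le _), Fin.predAbove_right_zero]

lemma spliceShapes_last : spliceShapes P K μ (Fin.last (s + 1)) = μ (Fin.last s) ∪ K := by
  rw [spliceShapes_of_lt (Fin.castSucc_lt_last P), Fin.predAbove_right_last]

lemma spliceShapes_castSucc_self : spliceShapes P K μ P.castSucc = μ P := by
  rw [spliceShapes_of_le le_rfl, Fin.predAbove_castSucc_self]

lemma spliceShapes_succ_self : spliceShapes P K μ P.succ = μ P ∪ K := by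
  rw [spliceShapes_of_lt (Fin.castSucc_lt_succ (i := P)), Fin.predAbove_succ_self]

lemma spliceShapes_succAbove_castSucc (k : Fin s) :
    spliceShapes P K μ (P.succAbove k).castSucc =
      μ k.castSucc ∪ if P ≤ k.castSucc then K else ∅ := by
  rcases lt_or_ge k.castSucc P with h | h
  · rw [Fin.succAbove_of_castSucc_lt _ _ h,
      spliceShapes_of_le (Fin.castSucc_le_castSucc_iff.2 h.le),
      Fin.predAbove_castSucc_of_le _ _ h.le, if_neg (not_le.2 h), Finset.union_empty]
  · rw [Fin.succAbove_of_le_castSucc _ _ h, ← Fin.succ_castSucc,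
      spliceShapes_of_lt (Fin.castSucc_lt_succ_iff.2 h), Fin.predAbove_succ_of_le _ _ h, if_pos h]

lemma spliceShapes_succAbove_succ (k : Fin s) :
    spliceShapes P K μ (P.succAbove k).succ = μ k.succ ∪ if P ≤ k.castSucc then K else ∅ := by
  rcases lt_or_ge k.castSucc P with h | h
  · have hk : k.succ ≤ P := Fin.castSucc_lt_iff_succ_le.1 h
    rw [Fin.succAbove_of_castSucc_lt _ _ h, Fin.succ_castSucc,
      spliceShapes_of_le (Fin.castSucc_le_castSucc_iff.2 hk),
      Fin.predAbove_castSucc_of_le _ _ hk, if_neg (not_le.2 h), Finset.union_empty]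
  · have hk : P ≤ k.succ := h.trans (Fin.castSucc_lt_succ (i := k)).le
    rw [Fin.succAbove_of_le_castSucc _ _ h,
      spliceShapes_of_lt (Fin.castSucc_lt_succ_iff.2 hk), Fin.predAbove_succ_of_le _ _ hk, if_pos h]

lemma spliceShapes_succ_sdiff_castSucc_self (hK : Disjoint (μ P) K) :
    spliceShapes P K μ P.succ \ spliceShapes P K μ P.castSucc = K := by
  rw [spliceShapes_succ_self, spliceShapes_castSucc_self, Finset.union_sdiff_cancel_left hK]

lemma spliceShapes_succAbove_sdiff (k : Fin s) (hK : Disjoint (μ k.succ) K) :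
    spliceShapes P K μ (P.succAbove k).succ \ spliceShapes P K μ (P.succAbove k).castSucc =
      μ k.succ \ μ k.castSucc := by
  rw [spliceShapes_succAbove_succ, spliceShapes_succAbove_castSucc]
  ext x
  have := @Finset.disjoint_left.1 hK x
  split_ifs <;> simp; tauto

lemma spliceShapes_succAbove_subset_iff (k : Fin s) (hK : Disjoint (μ k.castSucc) K) :
    spliceShapes P K μ (P.succAbove k).castSucc ⊆ spliceShapes P K μ (P.succAbove k).succ ↔
      μ k.castSucc ⊆ μ k.succ := by
  rw [spliceShapes_succAbove_succ, spliceShapes_succAbove_castSucc]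
  have := Finset.disjoint_left.1 hK
  split_ifs
  · refine ⟨fun h x hx => ?_, fun h => Finset.union_subset_union h subset_rfl⟩
    simpa [this hx] using h (Finset.mem_union_left _ hx)
  · simp only [Finset.union_empty]

lemma unspliceShapes_spliceShapes (hμK : ∀ j, Disjoint (μ j) K) :
    unspliceShapes P K (spliceShapes P K μ) = μ := by
  funext j
  rw [unspliceShapes, spliceShapes, Fin.predAbove_succAbove, Finset.union_sdiff_distrib,
    (hμK j).sdiff_eq_left]
  split_ifs <;> simp

lemma spliceShapes_unspliceShapes {ν : Fin (s + 2) → Finset X} (hν : Monotone ν)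
    (hsucc : ν P.succ = ν P.castSucc ∪ K) (hK : Disjoint (ν P.castSucc) K) :
    spliceShapes P K (unspliceShapes P K ν) = ν := by
  funext j
  rcases lt_trichotomy j P.castSucc with h | rfl | h
  · rw [spliceShapes_of_le h.le, unspliceShapes, Fin.succAbove_predAbove h.ne]
    exact (hK.mono_left (hν h.le)).sdiff_eq_left
  · rw [spliceShapes_castSucc_self, unspliceShapes, Fin.succAbove_castSucc_self, hsucc,
      Finset.union_sdiff_cancel_right hK]
  · rw [spliceShapes_of_lt h, unspliceShapes, Fin.succAbove_predAbove h.ne',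
      Finset.sdiff_union_of_subset]
    exact (hsucc ▸ Finset.subset_union_right).trans (hν (Fin.castSucc_lt_iff_succ_le.1 h))

lemma forall_spliceShapes_sdiff_iff (hK : ∀ j, Disjoint (μ j) K)
    (Q : Fin (s + 1) → Finset X → Prop) :
    (∀ i, Q i (spliceShapes P K μ i.succ \ spliceShapes P K μ i.castSucc)) ↔
      Q P K ∧ ∀ k : Fin s, Q (P.succAbove k) (μ k.succ \ μ k.castSucc) := by
  rw [Fin.forall_iff_succAbove P, spliceShapes_succ_sdiff_castSucc_self (hK P)]
  simp only [spliceShapes_succAbove_sdiff _ (hK _)]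

lemma spliceShapes_monotone_iff (hK : ∀ j, Disjoint (μ j) K) :
    Monotone (spliceShapes P K μ) ↔ Monotone μ := by
  rw [Fin.monotone_iff_le_succ, Fin.monotone_iff_le_succ, Fin.forall_iff_succAbove P,
    spliceShapes_castSucc_self, spliceShapes_succ_self]
  simp only [spliceShapes_succAbove_subset_iff _ (hK _),
    Finset.subset_union_left, true_and]

end Splice

lemma Fin.insertNth_mk_of_lt {β : Type*} {s : ℕ} {P : Fin (s + 1)} {x : β} {f : Fin s → β}
    {iv : ℕ} (hiv : iv < s + 1) (h : iv < P) :
    Fin.insertNth (α := fun _ => β) P x f ⟨iv, hiv⟩ =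
      f ⟨iv, h.trans_le (Nat.le_of_lt_succ P.isLt)⟩ := by
  have h' : Fin.castSucc ⟨iv, h.trans_le (Nat.le_of_lt_succ P.isLt)⟩ < P := Fin.lt_def.2 h
  rw [← Fin.insertNth_apply_succAbove (α := fun _ => β) P x f, Fin.succAbove_of_castSucc_lt _ _ h']
  rfl

lemma Fin.insertNth_mk_of_gt {β : Type*} {s : ℕ} {P : Fin (s + 1)} {x : β} {f : Fin s → β}
    {iv : ℕ} (hiv : iv < s + 1) (h : P < iv) :
    Fin.insertNth (α := fun _ => β) P x f ⟨iv, hiv⟩ = f ⟨iv - 1, by omega⟩ := by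
  rw [← Fin.insertNth_apply_succAbove (α := fun _ => β) P x f,
    Fin.succAbove_of_le_castSucc _ _ (Fin.le_def.2 (by simp only [Fin.val_castSucc]; omega))]
  congr 1
  ext
  simp only [Fin.val_succ]
  omega

def insertAfter {β : Type*} (p : ℕ) (x : β) (f : ℕ → β) (i : ℕ) : β :=
  if i ≤ p then f i else if i = p + 1 then x else f (i - 1)

/-- Stated pointwise in `j` so that it unfolds to the content `Λ'` written in the theorem. -/
def insertContentAfter (p : ℕ) (κ : ℕ → ℕ) (lam : ℕ → ℕ → ℕ) (i j : ℕ) : ℕ :=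
  insertAfter p (κ j) (lam · j) i

section InsertAfter

variable {β : Type*} {p : ℕ} {x : β} {f : ℕ → β}

lemma insertAfter_of_le {i : ℕ} (h : i ≤ p) : insertAfter p x f i = f i := if_pos h

lemma insertAfter_succ_self : insertAfter p x f (p + 1) = x := by simp [insertAfter]

lemma insertAfter_of_lt {i : ℕ} (h : p + 1 < i) : insertAfter p x f i = f (i - 1) := by
  rw [insertAfter, if_neg (by omega), if_neg (by omega)]

lemma insertAfter_succAbove {s : ℕ} (P : Fin (s + 1)) (k : Fin s) :
    insertAfter P x f ((P.succAbove k : ℕ) + 1) = f (k + 1) := by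
  rcases lt_or_ge k.castSucc P with h | h
  · have := Fin.lt_def.1 h
    rw [Fin.val_castSucc] at this
    rw [Fin.succAbove_of_castSucc_lt _ _ h, Fin.val_castSucc, insertAfter_of_le this]
  · have := Fin.le_def.1 h
    rw [Fin.val_castSucc] at this
    rw [Fin.succAbove_of_le_castSucc _ _ h, Fin.val_succ, insertAfter_of_lt (by omega),
      Nat.add_sub_cancel]

lemma insertContentAfter_succ_self {κ : ℕ → ℕ} {lam : ℕ → ℕ → ℕ} :
    insertContentAfter p κ lam (p + 1) = κ :=
  funext fun _ => insertAfter_succ_self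

lemma insertContentAfter_succAbove {κ : ℕ → ℕ} {lam : ℕ → ℕ → ℕ} {s : ℕ} (P : Fin (s + 1))
    (k : Fin s) : insertContentAfter P κ lam ((P.succAbove k : ℕ) + 1) = lam (k + 1) :=
  funext fun _ => insertAfter_succAbove P k

end InsertAfter

lemma mem_rect {n b : ℕ} {q : ℕ × ℕ} :
    q ∈ Rect n b ↔ (1 ≤ q.1 ∧ q.1 ≤ b) ∧ b ≤ q.2 ∧ q.2 ≤ n - 1 := by
  simp [Rect]

lemma mem_staircase {n : ℕ} {α : Finset ℕ} {q : ℕ × ℕ} :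
    q ∈ Staircase n α ↔ ∃ e ∈ α, q ∈ Rect n e :=
  Finset.mem_biUnion

def kappaBoxes (c b d : ℕ) : Finset (ℕ × ℕ) := Finset.Icc (c + 1) b ×ˢ Finset.Icc b (d - 1)

lemma mem_kappaBoxes {c b d : ℕ} {q : ℕ × ℕ} :
    q ∈ kappaBoxes c b d ↔ (c + 1 ≤ q.1 ∧ q.1 ≤ b) ∧ b ≤ q.2 ∧ q.2 ≤ d - 1 := by
  simp [kappaBoxes]

section Geometry

variable {n b c d : ℕ} {α : Finset ℕ}

lemma kappaBoxes_subset_rect (hdn : d ≤ n) : kappaBoxes c b d ⊆ Rect n b := by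
  intro q hq
  rw [mem_kappaBoxes] at hq
  rw [mem_rect]
  omega

lemma disjoint_staircase_kappaBoxes (hconsec : ∀ e ∈ α, e ≤ c ∨ d ≤ e) :
    Disjoint (Staircase n α) (kappaBoxes c b d) := by
  refine Finset.disjoint_left.2 fun q hqα hqK => ?_
  obtain ⟨e, he, hqe⟩ := mem_staircase.1 hqα
  rw [mem_rect] at hqe
  rw [mem_kappaBoxes] at hqK
  rcases hconsec e he with h | h <;> omega

lemma staircase_insert (hc : c ∈ α) (hd : d ∈ α) (hcb : c < b) (hbd : b < d) (hdn : d ≤ n) :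
    Staircase n (insert b α) = Staircase n α ∪ kappaBoxes c b d := by
  have hRect : Rect n b ⊆ Staircase n α ∪ kappaBoxes c b d := by
    intro q hq
    rw [mem_rect] at hq
    rw [Finset.mem_union, mem_staircase, mem_kappaBoxes]
    by_cases hqc : q.1 ≤ c
    · exact Or.inl ⟨c, hc, mem_rect.2 (by omega)⟩
    by_cases hqd : q.2 < d
    · exact Or.inr (by omega)
    · exact Or.inl ⟨d, hd, mem_rect.2 (by omega)⟩
  rw [Staircase, Finset.biUnion_insert, ← Staircase]
  refine subset_antisymm (Finset.union_subset hRect Finset.subset_union_left) ?_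
  exact Finset.union_subset Finset.subset_union_right
    ((kappaBoxes_subset_rect hdn).trans Finset.subset_union_left)

end Geometry

namespace IsFilteredTableau

variable {n s : ℕ} {α : Finset ℕ} {a : ℕ → ℕ} {lam : ℕ → ℕ → ℕ}
  {F : (Fin (s + 1) → Finset (ℕ × ℕ)) × (Fin s → ℕ × ℕ → ℕ)}

lemma monotone (hF : IsFilteredTableau n s α a lam F) : Monotone F.1 :=
  Fin.monotone_iff_le_succ.2 hF.2.2.2.1

lemma row_le_of_mem (hF : IsFilteredTableau n s α a lam F) {j : Fin (s + 1)} {c : ℕ}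
    (ha : ∀ i, 1 ≤ i → i ≤ (j : ℕ) → a i ≤ c) {q : ℕ × ℕ} (hq : q ∈ F.1 j) : q.1 ≤ c := by
  obtain ⟨i, hij, hqi⟩ := exists_mem_step_of_mem hF.1 j hq
  have := mem_rect.1 (hF.2.2.2.2.1 i hqi)
  have := Fin.lt_def.1 hij
  rw [Fin.val_castSucc] at this
  have := ha ((i : ℕ) + 1) (by omega) (by omega)
  omega

lemma mem_of_col_lt (hF : IsFilteredTableau n s α a lam F) {j : Fin (s + 1)} {d : ℕ}
    (ha : ∀ i, (j : ℕ) < i → i ≤ s → d ≤ a i) {q : ℕ × ℕ} (hq : q ∈ Staircase n α) (hqd : q.2 < d) :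
    q ∈ F.1 j := by
  refine mem_of_mem_last_of_notMem_step (hF.2.1 ▸ hq) j fun i hij hqi => ?_
  have := mem_rect.1 (hF.2.2.2.2.1 i hqi)
  have := Fin.le_def.1 hij
  rw [Fin.val_castSucc] at this
  have := ha ((i : ℕ) + 1) (by omega) (by omega)
  omega

end IsFilteredTableau

def rectContent (r w j : ℕ) : ℕ := if 1 ≤ j ∧ j ≤ r then w else 0

def kappaFilling (c b d : ℕ) (q : ℕ × ℕ) : ℕ := if q ∈ kappaBoxes c b d then q.1 - c else 0

section Kappa

variable {b c d : ℕ}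

lemma card_kappaBoxes (hbd : b < d) : (kappaBoxes c b d).card = (b - c) * (d - b) := by
  rw [kappaBoxes, Finset.card_product, Nat.card_Icc, Nat.card_Icc]
  congr 1 <;> omega

lemma isLR_kappaFilling (hbd : b < d) :
    IsLR (kappaBoxes c b d) (rectContent (b - c) (d - b)) (kappaFilling c b d) := by
  have hT : ∀ q ∈ kappaBoxes c b d, kappaFilling c b d q = q.1 - c := fun q hq => if_pos hq
  refine ⟨fun q hq => ?_, fun q hq => if_neg hq, fun q hq r hr h _ => ?_,
    fun q hq r hr _ h => ?_, fun j hj => ?_, fun q₀ _ i _ => ?_⟩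
  · rw [hT q hq]; have := mem_kappaBoxes.1 hq; omega
  · rw [hT q hq, hT r hr, h]
  · rw [hT q hq, hT r hr]; have := mem_kappaBoxes.1 hq; omega
  · have hmem : ∀ q, q ∈ (kappaBoxes c b d).filter (fun q => kappaFilling c b d q = j) ↔
        (c + 1 ≤ q.1 ∧ q.1 ≤ b) ∧ (b ≤ q.2 ∧ q.2 ≤ d - 1) ∧ q.1 = c + j := by
      intro q
      rw [Finset.mem_filter, ← and_assoc, ← mem_kappaBoxes]
      exact and_congr_right fun hq => by rw [hT q hq]; have := mem_kappaBoxes.1 hq; omega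
    rw [rectContent]
    split_ifs with hjr
    · rw [show (kappaBoxes c b d).filter (fun q => kappaFilling c b d q = j) =
          {c + j} ×ˢ Finset.Icc b (d - 1) by
          ext q; rw [hmem, Finset.mem_product, Finset.mem_singleton, Finset.mem_Icc]; omega]
      simp only [Finset.card_product, Finset.card_singleton, Nat.card_Icc]
      omega
    · rw [show (kappaBoxes c b d).filter (fun q => kappaFilling c b d q = j) = ∅ by
          ext q; rw [hmem]; simp; omega]
      rfl
  · -- moving a box up one row turns an entry `i + 1` into an `i` that is read earlier
    refine Finset.card_le_card_of_injOn (fun q => (q.1 - 1, q.2)) (fun q hq => ?_)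
      (fun q hq r hr h => ?_)
    · simp only [ReadPrefix, Finset.mem_coe, Finset.mem_filter] at hq ⊢
      obtain ⟨⟨hqK, hq₀⟩, hqi⟩ := hq
      rw [hT q hqK] at hqi
      have hK := mem_kappaBoxes.1 hqK
      have hK' : (q.1 - 1, q.2) ∈ kappaBoxes c b d := mem_kappaBoxes.2 (by omega)
      refine ⟨⟨hK', by omega⟩, ?_⟩
      rw [hT _ hK']
      omega
    · simp only [ReadPrefix, Finset.mem_coe, Finset.mem_filter, Prod.mk.injEq] at hq hr h
      rw [hT q hq.1.1] at hq
      rw [hT r hr.1.1] at hr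
      exact Prod.ext (by omega) h.2

lemma IsLR.le_of_rectContent {S : Finset (ℕ × ℕ)} {U : ℕ × ℕ → ℕ} {r w : ℕ}
    (h : IsLR S (rectContent r w) U) {q : ℕ × ℕ} (hq : q ∈ S) : U q ≤ r := by
  by_contra hlt
  have hcard := h.2.2.2.2.1 (U q) (h.1 q hq)
  rw [rectContent, if_neg (by omega)] at hcard
  exact Finset.filter_eq_empty_iff.1 (Finset.card_eq_zero.1 hcard) hq rfl

lemma IsLR.card_eq_of_rectContent {S : Finset (ℕ × ℕ)} {U : ℕ × ℕ → ℕ} {r w : ℕ}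
    (h : IsLR S (rectContent r w) U) : S.card = r * w := by
  rw [Finset.card_eq_sum_card_fiberwise (t := Finset.Icc 1 r)
    fun q hq => Finset.mem_Icc.2 ⟨h.1 q hq, h.le_of_rectContent hq⟩]
  rw [Finset.sum_congr rfl fun j hj => (h.2.2.2.2.1 j (Finset.mem_Icc.1 hj).1).trans
    (if_pos (Finset.mem_Icc.1 hj)), Finset.sum_const, Nat.card_Icc, smul_eq_mul, Nat.add_sub_cancel]

lemma IsLR.eq_kappa_of_kappaBoxes_subset (hbd : b < d) {S : Finset (ℕ × ℕ)} {U : ℕ × ℕ → ℕ}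
    (hKS : kappaBoxes c b d ⊆ S) (h : IsLR S (rectContent (b - c) (d - b)) U) :
    S = kappaBoxes c b d ∧ U = kappaFilling c b d := by
  have hS : S = kappaBoxes c b d := (Finset.eq_of_subset_of_card_le hKS
    (by rw [h.card_eq_of_rectContent, card_kappaBoxes hbd])).symm
  refine ⟨hS, funext fun q => ?_⟩
  by_cases hq : q ∈ kappaBoxes c b d
  swap
  · rw [kappaFilling, if_neg hq]
    exact h.2.1 q (hS ▸ hq)
  rw [kappaFilling, if_pos hq]
  obtain ⟨⟨h1, h2⟩, h3, h4⟩ := mem_kappaBoxes.1 hq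
  have hcol : ∀ x ∈ Set.Icc (c + 1) b, (x, q.2) ∈ S := fun x hx =>
    hKS (mem_kappaBoxes.2 ⟨hx, h3, h4⟩)
  -- the column through `q` is strictly increasing from `≥ 1` to `≤ b - c` over `b - c` rows
  have hmono : StrictMonoOn (fun x => U (x, q.2)) (Set.Icc (c + 1) b) := fun x hx y hy hxy =>
    h.2.2.2.1 _ (hcol x hx) _ (hcol y hy) rfl hxy
  have hlow := hmono.add_sub_le_nat le_rfl h1 h2
  have hhigh := hmono.add_sub_le_nat h1 h2 le_rfl
  have htop := h.1 _ (hcol (c + 1) ⟨le_rfl, by omega⟩)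
  have hbot := h.le_of_rectContent (hcol b ⟨by omega, le_rfl⟩)
  change U (q.1, q.2) = q.1 - c
  omega

end Kappa

section Insertion

variable {n s b c d : ℕ} {α : Finset ℕ} {a : ℕ → ℕ} {lam : ℕ → ℕ → ℕ} {P : Fin (s + 1)}

lemma IsFilteredTableau.disjoint_kappaBoxes
    {F : (Fin (s + 1) → Finset (ℕ × ℕ)) × (Fin s → ℕ × ℕ → ℕ)}
    (hF : IsFilteredTableau n s α a lam F) (hdisj : Disjoint (Staircase n α) (kappaBoxes c b d))
    (j : Fin (s + 1)) : Disjoint (F.1 j) (kappaBoxes c b d) :=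
  hdisj.mono_left (hF.2.2.1 j).1

lemma IsFilteredTableau.isShapeIn_spliceShapes
    {F : (Fin (s + 1) → Finset (ℕ × ℕ)) × (Fin s → ℕ × ℕ → ℕ)}
    (hF : IsFilteredTableau n s α a lam F) (hbd : b < d)
    (hstair : Staircase n (insert b α) = Staircase n α ∪ kappaBoxes c b d)
    (ha_le_c : ∀ i, 1 ≤ i → i ≤ (P : ℕ) → a i ≤ c) (hd_le_a : ∀ i, (P : ℕ) < i → i ≤ s → d ≤ a i)
    (j : Fin (s + 2)) :
    IsShapeIn (Staircase n (insert b α)) (spliceShapes P (kappaBoxes c b d) F.1 j) := by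
  rw [hstair]
  rcases le_or_gt j P.castSucc with hj | hj
  · have hjP : P.predAbove j ≤ P := by
      simpa using Fin.predAbove_right_monotone P hj
    rw [spliceShapes_of_le hj]
    refine ⟨(hF.2.2.1 _).1.trans Finset.subset_union_left, fun q hq r hr h1 h2 => ?_⟩
    rcases Finset.mem_union.1 hr with hr | hr
    · exact (hF.2.2.1 _).2 q hq r hr h1 h2
    · -- rows of the early shapes stop at `c`, above every row of `κ`
      have := hF.row_le_of_mem (fun i h1 h2 => ha_le_c i h1 (h2.trans (Fin.le_def.1 hjP))) hq
      have := mem_kappaBoxes.1 hr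
      omega
  · have hjP : P ≤ P.predAbove j := by
      simpa using Fin.predAbove_right_monotone P (Fin.castSucc_lt_iff_succ_le.1 hj)
    rw [spliceShapes_of_lt hj]
    refine ⟨Finset.union_subset_union (hF.2.2.1 _).1 subset_rfl, fun q hq r hr h1 h2 => ?_⟩
    rcases Finset.mem_union.1 hr with hr | hr
    · refine Finset.mem_union_left _ ?_
      rcases Finset.mem_union.1 hq with hq | hq
      · exact (hF.2.2.1 _).2 q hq r hr h1 h2
      · -- boxes left of column `d` are all placed by step `P`
        have := mem_kappaBoxes.1 hq
        exact hF.monotone hjP (hF.mem_of_col_lt hd_le_a hr (by omega))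
    · exact Finset.mem_union_right _ hr

theorem isFilteredTableau_splice_iff {μ : Fin (s + 1) → Finset (ℕ × ℕ)} {T : Fin s → ℕ × ℕ → ℕ}
    (hK : ∀ j, Disjoint (μ j) (kappaBoxes c b d)) (hbd : b < d) (hdn : d ≤ n)
    (hstair : Staircase n (insert b α) = Staircase n α ∪ kappaBoxes c b d)
    (hdisj : Disjoint (Staircase n α) (kappaBoxes c b d))
    (ha_le_c : ∀ i, 1 ≤ i → i ≤ (P : ℕ) → a i ≤ c) (hd_le_a : ∀ i, (P : ℕ) < i → i ≤ s → d ≤ a i) :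
    IsFilteredTableau n (s + 1) (insert b α) (insertAfter P b a)
        (insertContentAfter P (rectContent (b - c) (d - b)) lam)
        (spliceShapes P (kappaBoxes c b d) μ, Fin.insertNth P (kappaFilling c b d) T) ↔
      IsFilteredTableau n s α a lam (μ, T) := by
  have hlast : spliceShapes P (kappaBoxes c b d) μ (Fin.last (s + 1)) = Staircase n (insert b α) ↔
      μ (Fin.last s) = Staircase n α := by
    rw [spliceShapes_last, hstair]
    refine ⟨fun h => ?_, fun h => h ▸ rfl⟩
    simpa [Finset.union_sdiff_cancel_right (hK _), Finset.union_sdiff_cancel_right hdisj] using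
      congrArg (· \ kappaBoxes c b d) h
  have hrect := forall_spliceShapes_sdiff_iff (P := P) hK
    fun i S => S ⊆ Rect n (insertAfter P b a (i + 1))
  have hLR := forall_spliceShapes_sdiff_iff (P := P) hK fun i S =>
    IsLR S (insertContentAfter P (rectContent (b - c) (d - b)) lam (i + 1))
      ((Fin.insertNth P (kappaFilling c b d) T : Fin (s + 1) → ℕ × ℕ → ℕ) i)
  simp only [insertAfter_succ_self, insertAfter_succAbove, insertContentAfter_succ_self,
    insertContentAfter_succAbove, Fin.insertNth_apply_same, Fin.insertNth_apply_succAbove]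
    at hrect hLR
  constructor
  · rintro ⟨h0, hl, hshape, hmono, hR, hL⟩
    refine ⟨spliceShapes_zero.symm.trans h0, hlast.1 hl, fun j => ?_,
      Fin.monotone_iff_le_succ.1 ((spliceShapes_monotone_iff hK).1
        (Fin.monotone_iff_le_succ.2 hmono)), (hrect.1 hR).2, (hLR.1 hL).2⟩
    change IsShapeIn _ (μ j)
    rw [← congrFun (unspliceShapes_spliceShapes hK) j]
    exact (hstair ▸ hshape _ : IsShapeIn _ _).sdiff hdisj
  · intro hF
    exact ⟨spliceShapes_zero.trans hF.1, hlast.2 hF.2.1,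
      hF.isShapeIn_spliceShapes hbd hstair ha_le_c hd_le_a,
      Fin.monotone_iff_le_succ.1 ((spliceShapes_monotone_iff hK).2 hF.monotone),
      hrect.2 ⟨kappaBoxes_subset_rect hdn, hF.2.2.2.2.1⟩,
      hLR.2 ⟨isLR_kappaFilling hbd, hF.2.2.2.2.2⟩⟩

lemma IsFilteredTableau.eq_spliceShapes_unspliceShapes
    {G : (Fin (s + 2) → Finset (ℕ × ℕ)) × (Fin (s + 1) → ℕ × ℕ → ℕ)}
    (hG : IsFilteredTableau n (s + 1) (insert b α) (insertAfter P b a)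
      (insertContentAfter P (rectContent (b - c) (d - b)) lam) G) (hbd : b < d)
    (hstair : Staircase n (insert b α) = Staircase n α ∪ kappaBoxes c b d)
    (ha_le_c : ∀ i, 1 ≤ i → i ≤ (P : ℕ) → a i ≤ c) (hd_le_a : ∀ i, (P : ℕ) < i → i ≤ s → d ≤ a i) :
    G = (spliceShapes P (kappaBoxes c b d) (unspliceShapes P (kappaBoxes c b d) G.1),
      Fin.insertNth P (kappaFilling c b d) (Fin.removeNth P G.2)) := by
  have hdisjP : Disjoint (G.1 P.castSucc) (kappaBoxes c b d) := by
    refine Finset.disjoint_left.2 fun q hq hqK => ?_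
    have := hG.row_le_of_mem (fun i h1 h2 => by
      rw [Fin.val_castSucc] at h2
      rw [insertAfter_of_le h2]
      exact ha_le_c i h1 h2) hq
    have := mem_kappaBoxes.1 hqK
    omega
  have hKsucc : kappaBoxes c b d ⊆ G.1 P.succ := fun q hqK => by
    have := mem_kappaBoxes.1 hqK
    refine hG.mem_of_col_lt (d := d) (fun i h1 h2 => ?_)
      (hstair ▸ Finset.mem_union_right _ hqK) (by omega)
    rw [Fin.val_succ] at h1
    rw [insertAfter_of_lt h1]
    exact hd_le_a (i - 1) (by omega) (by omega)
  obtain ⟨hstep, hfill⟩ := IsLR.eq_kappa_of_kappaBoxes_subset hbd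
    (fun q hq => Finset.mem_sdiff.2 ⟨hKsucc hq, Finset.disjoint_right.1 hdisjP hq⟩)
    (insertContentAfter_succ_self ▸ hG.2.2.2.2.2 P)
  refine Prod.ext (spliceShapes_unspliceShapes hG.monotone ?_ hdisjP).symm ?_
  · rw [← hstep, Finset.union_sdiff_of_subset (hG.monotone (Fin.castSucc_le_succ P))]
  · rw [← hfill, Fin.insertNth_self_removeNth]

def filteredTableauInsertEquiv (P : Fin (s + 1)) (hbd : b < d) (hdn : d ≤ n)
    (hstair : Staircase n (insert b α) = Staircase n α ∪ kappaBoxes c b d)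
    (hdisj : Disjoint (Staircase n α) (kappaBoxes c b d))
    (ha_le_c : ∀ i, 1 ≤ i → i ≤ (P : ℕ) → a i ≤ c) (hd_le_a : ∀ i, (P : ℕ) < i → i ≤ s → d ≤ a i) :
    {F // IsFilteredTableau n s α a lam F} ≃
      {G // IsFilteredTableau n (s + 1) (insert b α) (insertAfter P b a)
        (insertContentAfter P (rectContent (b - c) (d - b)) lam) G} where
  toFun F := ⟨(spliceShapes P (kappaBoxes c b d) F.1.1, Fin.insertNth P (kappaFilling c b d) F.1.2),
    (isFilteredTableau_splice_iff (F.2.disjoint_kappaBoxes hdisj) hbd hdn hstair hdisj ha_le_c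
      hd_le_a).2 F.2⟩
  invFun G := ⟨(unspliceShapes P (kappaBoxes c b d) G.1.1, Fin.removeNth P G.1.2),
    (isFilteredTableau_splice_iff (fun _ => Finset.sdiff_disjoint) hbd hdn hstair hdisj ha_le_c
      hd_le_a).1
      (by
        have hG := G.2
        rwa [hG.eq_spliceShapes_unspliceShapes hbd hstair ha_le_c hd_le_a] at hG)⟩
  left_inv F := Subtype.ext (Prod.ext
    (unspliceShapes_spliceShapes (F.2.disjoint_kappaBoxes hdisj))
    (Fin.removeNth_insertNth (α := fun _ => ℕ × ℕ → ℕ) P _ _))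
  right_inv G := Subtype.ext (G.2.eq_spliceShapes_unspliceShapes hbd hstair ha_le_c hd_le_a).symm

end Insertion

/-- Let `Λ = ((a 1, lam 1),…,(a s, lam s))` be a Grassmannian Schubert problem datum
for `α`, and let `c < b < d` be with `c, d` consecutive elements of `α` and `b ∉ α`.
Inserting the pair `(b, κ)`, where `κ` is the rectangular partition with `b − c` rows
and `d − b` columns (whose boxes in `⎡_{α ∪ {b}}` form
`K = {(r, col) : c < r ≤ b, b ≤ col ≤ d−1}`, filled with entry `r − c` in row `r`),
at the sorted position `p` gives a bijection between filtered tableaux of shape `⎡_α`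
with content `Λ` and filtered tableaux of shape `⎡_{α ∪ {b}}` with content `Λ'`. -/
theorem insertion_bijection (n s : ℕ) (α : Finset ℕ)
    (hαsub : α ⊆ Finset.Icc 1 (n - 1))
    (b c d : ℕ) (hc : c ∈ α) (hd : d ∈ α) (hcb : c < b) (hbd : b < d)
    (hconsec : ∀ e ∈ α, e ≤ c ∨ d ≤ e)
    (a : ℕ → ℕ) (lam : ℕ → ℕ → ℕ)
    (haα : ∀ i, 1 ≤ i → i ≤ s → a i ∈ α)
    (p : ℕ) (hp : p ≤ s)
    (hpos : ∀ i, 1 ≤ i → i ≤ s → (i ≤ p ↔ a i < b)) :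
    ∃ Φ : {F // IsFilteredTableau n s α a lam F} →
          {G // IsFilteredTableau n (s + 1) (insert b α)
                  (fun i => if i ≤ p then a i else if i = p + 1 then b else a (i - 1))
                  (fun i jj => if i ≤ p then lam i jj
                    else if i = p + 1 then
                      (if 1 ≤ jj ∧ jj ≤ b - c then d - b else 0)
                    else lam (i - 1) jj) G},
      Function.Bijective Φ ∧
      ∀ F : {F // IsFilteredTableau n s α a lam F},
        (∀ (jv : ℕ) (hjv : jv < s + 2),
          (∀ _ : jv ≤ p, (Φ F).1.1 ⟨jv, hjv⟩ = F.1.1 ⟨jv, by omega⟩) ∧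
          (∀ _ : p < jv, (Φ F).1.1 ⟨jv, hjv⟩ =
            F.1.1 ⟨jv - 1, by omega⟩ ∪ Finset.Icc (c + 1) b ×ˢ Finset.Icc b (d - 1))) ∧
        (∀ (iv : ℕ) (hiv : iv < s + 1),
          (∀ _ : iv < p, (Φ F).1.2 ⟨iv, hiv⟩ = F.1.2 ⟨iv, by omega⟩) ∧
          (∀ _ : iv = p, (Φ F).1.2 ⟨iv, hiv⟩ =
            fun q => if q ∈ Finset.Icc (c + 1) b ×ˢ Finset.Icc b (d - 1)
              then q.1 - c else 0) ∧
          (∀ _ : p < iv, (Φ F).1.2 ⟨iv, hiv⟩ = F.1.2 ⟨iv - 1, by omega⟩)) := by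
  have hdn : d ≤ n := by have := Finset.mem_Icc.1 (hαsub hd); omega
  have ha_le_c : ∀ i, 1 ≤ i → i ≤ p → a i ≤ c := fun i h1 h2 =>
    (hconsec _ (haα i h1 (h2.trans hp))).resolve_right fun h => by
      have := (hpos i h1 (h2.trans hp)).1 h2
      omega
  have hd_le_a : ∀ i, p < i → i ≤ s → d ≤ a i := fun i h1 h2 =>
    (hconsec _ (haα i (by omega) h2)).resolve_left fun h => by
      have := (hpos i (by omega) h2).2 (by omega)
      omega
  obtain ⟨P, rfl⟩ : ∃ P : Fin (s + 1), (P : ℕ) = p := ⟨⟨p, by omega⟩, rfl⟩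
  refine ⟨filteredTableauInsertEquiv (lam := lam) P hbd hdn
      (staircase_insert hc hd hcb hbd hdn) (disjoint_staircase_kappaBoxes hconsec) ha_le_c hd_le_a,
    Equiv.bijective _,
    fun F => ⟨fun jv hjv => ⟨spliceShapes_mk_of_le hjv, spliceShapes_mk_of_lt hjv⟩,
      fun iv hiv => ⟨Fin.insertNth_mk_of_lt hiv, fun h => ?_, Fin.insertNth_mk_of_gt hiv⟩⟩⟩
  subst h
  exact Fin.insertNth_apply_same (α := fun _ => ℕ × ℕ → ℕ) P _ _
end

section
/- Let w be a permutation of {1,...,n} whose descent set is contained in {a_t} ∪ {positions ≤ a_t} in the strong sense that w has no descents after position a_t, and suppose w appears (with nonzero coefficient, modeled combinatorially via the a-Bruhat order) as the top of a chain id = v_0 ≤_{a_1} v_1 ≤_{a_2} ... ≤_{a_t} v_t = w where a_1 ≤ ... ≤ a_t. Then for each i, v_i has no descents after position a_i. In particular each v_i with v_i(1) > ... > v_i(a_i) is a valley permutation with floor at a_i. -/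
/-
The third clause of `v ≤_a w` says that `w` keeps every ascent of `v` lying
after position `a`, and an ascent after `a i` lies after `a (i - 1) ≤ a i` as well. So,
starting from the identity, which has no descents at all, induction along the chain shows that
`v i` has no descents after `a i`. Consecutive ascents on `{a + 1, …, n}` chain into strict
monotonicity there, which is the increasing half of a valley.
-/

def NoDescentAfter (n a : ℕ) (w : Equiv.Perm ℕ) : Prop :=
  ∀ k, a < k → k < n → w k < w (k + 1)

theorem noDescentAfter_one (n a : ℕ) : NoDescentAfter n a 1 :=
  fun k _ _ ↦ by simp

theorem NoDescentAfter.mono {n a b : ℕ} {w : Equiv.Perm ℕ} (hw : NoDescentAfter n b w)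
    (hba : b ≤ a) : NoDescentAfter n a w :=
  fun k hak hkn ↦ hw k (hba.trans_lt hak) hkn

theorem NoDescentAfter.strictMonoOn {n a : ℕ} {w : Equiv.Perm ℕ} (hw : NoDescentAfter n a w) :
    StrictMonoOn w (Set.Ioc a n) :=
  strictMonoOn_of_lt_add_one Set.ordConnected_Ioc
    fun k _ hk hk' ↦ hw k hk.1 (Nat.lt_of_succ_le hk'.2)

theorem ABruhat.noDescentAfter {n a : ℕ} {v w : Equiv.Perm ℕ} (hvw : ABruhat n a v w)
    (hv : NoDescentAfter n a v) : NoDescentAfter n a w :=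
  fun k hak hkn ↦ hvw.2.2 k (k + 1) hak k.lt_succ_self hkn (hv k hak hkn)

theorem NoDescentAfter.isValley {n a : ℕ} {w : Equiv.Perm ℕ} (hw : NoDescentAfter n a w)
    (hdec : ∀ i j, 1 ≤ i → i < j → j ≤ a → w j < w i) : IsValley n a w :=
  ⟨hdec, fun _ _ hai hij hjn ↦ hw.strictMonoOn ⟨hai, hij.le.trans hjn⟩ ⟨hai.trans hij, hjn⟩ hij⟩

theorem noDescentAfter_of_chain {n t : ℕ} {a : ℕ → ℕ} {v : ℕ → Equiv.Perm ℕ} (hv0 : v 0 = 1)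
    (hmono : ∀ i, 1 ≤ i → i < t → a i ≤ a (i + 1))
    (hrel : ∀ i, 1 ≤ i → i ≤ t → ABruhat n (a i) (v (i - 1)) (v i)) :
    ∀ i, 1 ≤ i → i ≤ t → NoDescentAfter n (a i) (v i) := by
  intro i hi hit
  induction i with
  | zero => omega
  | succ m ih =>
    have hprev : NoDescentAfter n (a (m + 1)) (v m) := by
      rcases Nat.eq_zero_or_pos m with rfl | hm
      · exact hv0 ▸ noDescentAfter_one n (a 1)
      · exact (ih hm (by omega)).mono (hmono m hm (by omega))
    exact (hrel (m + 1) hi hit).noDescentAfter hprev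

theorem chain_no_descents_general (n t : ℕ) (a : ℕ → ℕ) (v : ℕ → Equiv.Perm ℕ)
    (hv0 : v 0 = 1)
    (hmono : ∀ i, 1 ≤ i → i < t → a i ≤ a (i + 1))
    (hrel : ∀ i, 1 ≤ i → i ≤ t → ABruhat n (a i) (v (i - 1)) (v i)) :
    ∀ i, 1 ≤ i → i ≤ t →
      (∀ k, a i < k → k < n → v i k < v i (k + 1)) ∧
      ((∀ jj kk, 1 ≤ jj → jj < kk → kk ≤ a i → v i kk < v i jj) →
        IsValley n (a i) (v i)) := by
  intro i hi hit
  have hnd := noDescentAfter_of_chain hv0 hmono hrel i hi hit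
  exact ⟨hnd, hnd.isValley⟩

/-- If `id = v_0 ≤_{a 1} v_1 ≤_{a 2} ⋯ ≤_{a t} v_t` is a chain in the `a`-Bruhat
orders with `a 1 ≤ ⋯ ≤ a t`, then each `v i` has no descents after position `a i`;
in particular, if moreover `v i (1) > ⋯ > v i (a i)` then `v i` is a valley
permutation with floor at `a i`. -/
theorem chain_no_descents (n t : ℕ) (a : ℕ → ℕ) (v : ℕ → Equiv.Perm ℕ)
    (hv0 : v 0 = 1)
    (hfix : ∀ i, i ≤ t → FixOutside n (v i))
    (hmono : ∀ i, 1 ≤ i → i < t → a i ≤ a (i + 1))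
    (han : ∀ i, 1 ≤ i → i ≤ t → a i ≤ n)
    (hrel : ∀ i, 1 ≤ i → i ≤ t → ABruhat n (a i) (v (i - 1)) (v i)) :
    ∀ i, 1 ≤ i → i ≤ t →
      (∀ k, a i < k → k < n → v i k < v i (k + 1)) ∧
      ((∀ jj kk, 1 ≤ jj → jj < kk → kk ≤ a i → v i kk < v i jj) →
        IsValley n (a i) (v i)) :=
  chain_no_descents_general n t a v hv0 hmono hrel
end
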